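/- arXiv:2503.02735 — 3 statements merged into one kernel-verified Lean document; each statement's English description precedes it below -/
import Mathlib

section
/- Let 𝒜 be a finite set with K = |𝒜| elements, let π₁,…,π_N be strictly positive probability distributions on 𝒜 with KL-barycenter π_KL = (1/N)∑_{i=1}^N π_i, and suppose D_KL(π_i ‖ π_KL) ≤ η for all i and π_KL(a) > 0 for all a. For λ ∈ (0,1), define the safe behavior policy π_safe^λ(a) = (1−λ) π_KL(a) + λ/K. Then σ_safe := max_{1≤i≤N} max_{a∈𝒜} π_i(a)/π_safe^λ(a) ≤ min( N/(1−λ) , 1/(1−λ) + 2ηK/λ + 2√(2ηK)/(√(1−λ)·√λ) ). -/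
/-!
Since `π_i ≤ N π_KL` and `π_safe ≥ (1 - λ) π_KL`, every ratio is at most `N / (1 - λ)`.
For the second bound write `KL(π_i ‖ π_KL) = ∑ π_KL klFun (π_i / π_KL)`; the inequality
`klFun u ≥ (u - 1)² / (2u)` for `u ≥ 1` (from the series of `-log (1 - y)`) bounds a single
term and gives `π_i ≤ π_KL + √(2 η π_i)`. Dividing by `π_safe ≥ max ((1 - λ) π_KL, λ / K)`,
the ratio `r` satisfies `r ≤ 1 / (1 - λ) + √(2 η K / λ) √r`, so
`√r ≤ √(2 η K / λ) + 1 / √(1 - λ)`, and squaring gives the bound.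
-/

open Finset Real InformationTheory

/-- KL divergence between two distributions on a finite set. -/
noncomputable def KLdiv {α : Type*} [Fintype α] (ν μ : α → ℝ) : ℝ :=
  ∑ a, ν a * Real.log (ν a / μ a)

lemma Real.add_sq_div_two_le_neg_log_one_sub {y : ℝ} (h0 : 0 ≤ y) (h1 : y < 1) :
    y + y ^ 2 / 2 ≤ -log (1 - y) := by
  have hs := hasSum_pow_div_log_of_abs_lt_one (by rwa [abs_of_nonneg h0])
  have := sum_le_hasSum (range 2) (fun n _ => by positivity) hs
  norm_num [sum_range_succ] at this
  linarith

lemma sq_sub_one_div_le_klFun {u : ℝ} (hu : 1 ≤ u) : (u - 1) ^ 2 / (2 * u) ≤ klFun u := by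
  have hu0 : 0 < u := by linarith
  have key := Real.add_sq_div_two_le_neg_log_one_sub (y := (u - 1) / u) (by positivity)
    (by rw [div_lt_one hu0]; linarith)
  rw [show 1 - (u - 1) / u = u⁻¹ by field_simp; ring, log_inv, neg_neg] at key
  have hmul := mul_le_mul_of_nonneg_left key hu0.le
  have hexpand : u * ((u - 1) / u + ((u - 1) / u) ^ 2 / 2) = u - 1 + (u - 1) ^ 2 / (2 * u) := by
    field_simp
  rw [klFun_apply]
  linarith

lemma mul_klFun_div_nonneg {x y : ℝ} (hx : 0 ≤ x) (hy : 0 < y) : 0 ≤ y * klFun (x / y) :=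
  mul_nonneg hy.le (klFun_nonneg (div_nonneg hx hy.le))

section KLdiv

variable {α : Type*} [Fintype α] {ν μ : α → ℝ}

lemma KLdiv_eq_sum_mul_klFun (hμ : ∀ a, 0 < μ a) (hsum : ∑ a, ν a = ∑ a, μ a) :
    KLdiv ν μ = ∑ a, μ a * klFun (ν a / μ a) := by
  have hterm : ∀ a, μ a * klFun (ν a / μ a) = ν a * log (ν a / μ a) + μ a - ν a := by
    intro a
    have := (hμ a).ne'
    rw [klFun_apply]
    field_simp
  simp only [hterm, sum_sub_distrib, sum_add_distrib, hsum, KLdiv]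
  ring

lemma KLdiv_nonneg (hν : ∀ a, 0 ≤ ν a) (hμ : ∀ a, 0 < μ a) (hsum : ∑ a, ν a = ∑ a, μ a) :
    0 ≤ KLdiv ν μ := by
  rw [KLdiv_eq_sum_mul_klFun hμ hsum]
  exact sum_nonneg fun a _ => mul_klFun_div_nonneg (hν a) (hμ a)

lemma sq_sub_div_le_KLdiv (hν : ∀ a, 0 ≤ ν a) (hμ : ∀ a, 0 < μ a) (hsum : ∑ a, ν a = ∑ a, μ a)
    {a : α} (ha : μ a ≤ ν a) : (ν a - μ a) ^ 2 / (2 * ν a) ≤ KLdiv ν μ := by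
  rw [KLdiv_eq_sum_mul_klFun hμ hsum]
  calc (ν a - μ a) ^ 2 / (2 * ν a)
      = μ a * ((ν a / μ a - 1) ^ 2 / (2 * (ν a / μ a))) := by
        field_simp [(hμ a).ne']
    _ ≤ μ a * klFun (ν a / μ a) :=
        mul_le_mul_of_nonneg_left (sq_sub_one_div_le_klFun ((one_le_div (hμ a)).mpr ha))
          (hμ a).le
    _ ≤ ∑ b, μ b * klFun (ν b / μ b) :=
        single_le_sum (f := fun b => μ b * klFun (ν b / μ b))
          (fun b _ => mul_klFun_div_nonneg (hν b) (hμ b)) (mem_univ a)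

lemma le_add_sqrt_of_KLdiv_le (hν : ∀ a, 0 ≤ ν a) (hμ : ∀ a, 0 < μ a)
    (hsum : ∑ a, ν a = ∑ a, μ a) {η : ℝ} (hη : KLdiv ν μ ≤ η) (a : α) :
    ν a ≤ μ a + √(2 * η * ν a) := by
  rcases le_or_gt (ν a) (μ a) with hle | hlt
  · linarith [sqrt_nonneg (2 * η * ν a)]
  · have hνa : 0 < ν a := (hμ a).trans hlt
    have hsq : (ν a - μ a) ^ 2 ≤ 2 * η * ν a := by
      have := (sq_sub_div_le_KLdiv hν hμ hsum hlt.le).trans hη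
      rw [div_le_iff₀ (by positivity)] at this
      linarith
    linarith [(le_abs_self _).trans (abs_le_sqrt hsq)]

end KLdiv

lemma le_add_sqrt_of_sq_le_add_mul {z b c : ℝ} (hb : 0 ≤ b) (hc : 0 ≤ c)
    (h : z ^ 2 ≤ c + b * z) : z ≤ b + √c := by
  by_contra! hlt
  nlinarith [sq_sqrt hc, sqrt_nonneg c, mul_nonneg hb (sqrt_nonneg c)]

lemma div_le_sq_sqrt_add_sqrt {x q s e B c : ℝ} (hx : 0 ≤ x) (hs : 0 < s) (hB : 0 ≤ B)
    (hc : 0 ≤ c) (hxq : x ≤ q + √(e * x)) (hqs : q ≤ c * s) (hes : e ≤ B * s) :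
    x / s ≤ (√B + √c) ^ 2 := by
  have hroot : √(e * x) / s ≤ √B * √(x / s) := by
    rw [← sqrt_mul hB, show √(e * x) / s = √(e * x / s ^ 2) by
      rw [sqrt_div' _ (sq_nonneg s), sqrt_sq hs.le]]
    refine sqrt_le_sqrt ?_
    rw [div_le_iff₀ (by positivity)]
    calc e * x ≤ B * s * x := mul_le_mul_of_nonneg_right hes hx
      _ = B * (x / s) * s ^ 2 := by field_simp
  have hquad : √(x / s) ^ 2 ≤ c + √B * √(x / s) := by
    rw [sq_sqrt (div_nonneg hx hs.le)]
    calc x / s ≤ (q + √(e * x)) / s := div_le_div_of_nonneg_right hxq hs.le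
      _ = q / s + √(e * x) / s := add_div _ _ _
      _ ≤ c + √B * √(x / s) := add_le_add ((div_le_iff₀ hs).mpr hqs) hroot
  exact (sqrt_le_left (by positivity)).mp
    (le_add_sqrt_of_sq_le_add_mul (sqrt_nonneg B) hc hquad)

lemma div_mix_le_div_one_sub {x q n lam K : ℝ} (hq : 0 < q) (hn : 0 ≤ n) (hK : 0 ≤ K)
    (hlam : lam ∈ Set.Ioo (0 : ℝ) 1) (hx : x ≤ n * q) :
    x / ((1 - lam) * q + lam / K) ≤ n / (1 - lam) := by
  obtain ⟨hlam0, hlam1⟩ := hlam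
  have hmix : (1 - lam) * q ≤ (1 - lam) * q + lam / K := le_add_of_nonneg_right (by positivity)
  rw [div_le_div_iff₀ ((mul_pos (by linarith) hq).trans_le hmix) (by linarith)]
  nlinarith

lemma div_mix_le_of_le_add_sqrt {x q η lam K : ℝ} (hx : 0 ≤ x) (hq : 0 < q) (hη : 0 ≤ η)
    (hK : 0 < K) (hlam : lam ∈ Set.Ioo (0 : ℝ) 1) (hxq : x ≤ q + √(2 * η * x)) :
    x / ((1 - lam) * q + lam / K)
      ≤ 1 / (1 - lam) + 2 * η * K / lam + 2 * √(2 * η * K) / (√(1 - lam) * √lam) := by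
  obtain ⟨hlam0, hlam1⟩ := hlam
  have hmix_KL : (1 - lam) * q ≤ (1 - lam) * q + lam / K :=
    le_add_of_nonneg_right (by positivity)
  have hmix_unif : lam / K ≤ (1 - lam) * q + lam / K :=
    le_add_of_nonneg_left (mul_nonneg (by linarith) hq.le)
  calc x / ((1 - lam) * q + lam / K) ≤ (√(2 * η * K / lam) + √(1 / (1 - lam))) ^ 2 := by
        refine div_le_sq_sqrt_add_sqrt hx ((mul_pos (by linarith) hq).trans_le hmix_KL)
          (by positivity) (by positivity) hxq ?_ ?_
        · rw [one_div_mul_eq_div, le_div_iff₀ (by linarith), mul_comm]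
          exact hmix_KL
        · calc 2 * η = 2 * η * K / lam * (lam / K) := by field_simp
            _ ≤ _ := mul_le_mul_of_nonneg_left hmix_unif (by positivity)
    _ = _ := by
        rw [add_sq, sq_sqrt (by positivity), sq_sqrt (by positivity), sqrt_div' _ hlam0.le,
          sqrt_div' _ (by linarith : (0 : ℝ) ≤ 1 - lam), sqrt_one]
        field_simp
        ring

theorem sigma_safe_bound_general {α : Type*} [Fintype α] (N : ℕ) (hN : 0 < N)
    (K : ℕ) (hK : K = Fintype.card α)
    (p : Fin N → α → ℝ)
    (hpos : ∀ i a, 0 < p i a) (hsum : ∀ i, ∑ a, p i a = 1)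
    (pKL : α → ℝ) (hpKL : ∀ a, pKL a = (1 / (N : ℝ)) * ∑ i, p i a)
    (hKLpos : ∀ a, 0 < pKL a)
    (η : ℝ) (hη : ∀ i, KLdiv (p i) pKL ≤ η)
    (lam : ℝ) (hlam : lam ∈ Set.Ioo (0:ℝ) 1)
    (psafe : α → ℝ) (hpsafe : ∀ a, psafe a = (1 - lam) * pKL a + lam / (K : ℝ)) :
    (⨆ i : Fin N, ⨆ a : α, p i a / psafe a)
      ≤ min ((N : ℝ) / (1 - lam))
          (1 / (1 - lam) + 2 * η * (K : ℝ) / lam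
            + 2 * Real.sqrt (2 * η * (K : ℝ)) / (Real.sqrt (1 - lam) * Real.sqrt lam)) := by
  have hN' : (0 : ℝ) < N := by exact_mod_cast hN
  have : Nonempty (Fin N) := ⟨⟨0, hN⟩⟩
  have : Nonempty α :=
    univ_nonempty_iff.mp (nonempty_of_sum_ne_zero (f := p ⟨0, hN⟩) (by simp [hsum]))
  have hK0 : (0 : ℝ) < K := by rw [hK]; exact_mod_cast Fintype.card_pos
  have hsumKL : ∀ i, ∑ a, p i a = ∑ a, pKL a := fun i => by
    simp only [hpKL, ← mul_sum, sum_comm (γ := α), hsum, sum_const, card_univ,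
      Fintype.card_fin, nsmul_eq_mul, mul_one]
    field_simp
  refine ciSup_le fun i => ciSup_le fun a => ?_
  have hle_mean : p i a ≤ N * pKL a := by
    rw [hpKL, ← mul_assoc, mul_one_div_cancel hN'.ne', one_mul]
    exact single_le_sum (f := fun j => p j a) (fun j _ => (hpos j a).le) (mem_univ i)
  have hη0 : 0 ≤ η := (KLdiv_nonneg (fun a => (hpos i a).le) hKLpos (hsumKL i)).trans (hη i)
  have hle_sqrt := le_add_sqrt_of_KLdiv_le (fun a => (hpos i a).le) hKLpos (hsumKL i) (hη i) a
  rw [hpsafe]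
  exact le_min (div_mix_le_div_one_sub (hKLpos a) hN'.le hK0.le hlam hle_mean)
    (div_mix_le_of_le_add_sqrt (hpos i a).le (hKLpos a) hη0 hK0 hlam hle_sqrt)

/-- bound on the maximal importance weight of the safe behavior policy
`π_safe^λ(a) = (1−λ)π_KL(a) + λ/K` (`K = |𝒜|`), when every target policy is
`η`-close in KL to the barycenter `π_KL`:
`σ_safe ≤ min(N/(1−λ), 1/(1−λ) + 2ηK/λ + 2√(2ηK)/(√(1−λ)√λ))`. -/
theorem sigma_safe_bound {α : Type*} [Fintype α] [Nonempty α] (N : ℕ) (hN : 0 < N)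
    (K : ℕ) (hK : K = Fintype.card α)
    (p : Fin N → α → ℝ)
    (hpos : ∀ i a, 0 < p i a) (hsum : ∀ i, ∑ a, p i a = 1)
    (pKL : α → ℝ) (hpKL : ∀ a, pKL a = (1 / (N : ℝ)) * ∑ i, p i a)
    (hKLpos : ∀ a, 0 < pKL a)
    (η : ℝ) (hη : ∀ i, KLdiv (p i) pKL ≤ η)
    (lam : ℝ) (hlam : lam ∈ Set.Ioo (0:ℝ) 1)
    (psafe : α → ℝ) (hpsafe : ∀ a, psafe a = (1 - lam) * pKL a + lam / (K : ℝ)) :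
    (⨆ i : Fin N, ⨆ a : α, p i a / psafe a)
      ≤ min ((N : ℝ) / (1 - lam))
          (1 / (1 - lam) + 2 * η * (K : ℝ) / lam
            + 2 * Real.sqrt (2 * η * (K : ℝ)) / (Real.sqrt (1 - lam) * Real.sqrt lam)) :=
  sigma_safe_bound_general N hN K hK p hpos hsum pKL hpKL hKLpos η hη lam hlam psafe hpsafe
end

section
/- Consider a multi-armed bandit with finite action set 𝒜 and reward distributions P_a supported on [0, R*], with means Q(a) and policy values v(π) = ∑_a π(a)Q(a). Let N strictly positive target policies be partitioned into M disjoint clusters K₁,…,K_M of sizes N₁,…,N_M, with cluster barycenters π_KL^{(j)} = (1/N_j)∑_{π∈K_j} π and σ_c = max_j max_{π∈K_j} max_a π(a)/π_KL^{(j)}(a). Assume v(π*) = v(π*^{(1)}) and v(π*^{(1)}) − v(π*^{(j)}) > Δ for all j = 2,…,M, where π*^{(j)} = argmax_{π∈K_j} v(π) and π* is the overall best target policy. Collect independent per-cluster datasets of equal sizes n₁ = ⋯ = n_M, each i.i.d. with A_t^{(j)} ∼ π_KL^{(j)} and R_t^{(j)} | A_t^{(j)} = a ∼ P_a, form the importance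 estimators v̂_n^{(j)}(π) = (1/n_j)∑_t (π(A_t^{(j)})/π_KL^{(j)}(A_t^{(j)})) R_t^{(j)} for π ∈ K_j, and let π̂_n be any selection maximizing v̂_n^{(j)}(π) over all j and π ∈ K_j. Then for any δ ∈ (0,1) and ε ∈ (0, Δ], if n = n₁·M ≥ 2 M R*² σ_c² log( (2 + N + M + (M−1)(N₁+1))/δ ) / ε², the regret ℛ(π̂_n) = v(π*) − v(π̂_n) satisfies P( ℛ(π̂_n) < ε ) ≥ 1 − δ. -/
open Finset Real MeasureTheory ProbabilityTheory

/-! Each importance-weighted reward `π(A) / π_KL(A) · R` lies in `[0, σ_c R*]` and has mean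
`v(π)`, so by Hoeffding's inequality each estimate `v̂(π)` deviates from `v(π)` by `ε / 2` with
probability at most `exp (-n₁ ε² / (2 σ_c² R*²))`. If the selected policy has regret at least `ε`,
then either it is overestimated or the best policy is underestimated by `ε / 2`; a union bound
over these `N + 1` events, together with the sample-size condition, gives the result. -/

section Hoeffding

variable {Ω : Type*} [MeasurableSpace Ω] {ν : Measure Ω} [IsProbabilityMeasure ν]
  {g : Ω → ℝ} {a b t : ℝ}

lemma measureReal_sum_sub_integral_ge_le {ι : Type*} [Fintype ι] (hg : Measurable g)
    (hab : ∀ᵐ x ∂ν, g x ∈ Set.Icc a b) (ht : 0 ≤ t) :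
    (Measure.pi fun _ : ι => ν).real {y | t ≤ ∑ i, (g (y i) - ν[g])}
      ≤ exp (-(2 * t ^ 2 / (Fintype.card ι * (b - a) ^ 2))) := by
  have hsub := hasSubgaussianMGF_of_mem_Icc hg.aemeasurable hab
  have hsub_i : ∀ i ∈ (univ : Finset ι),
      HasSubgaussianMGF (fun y : ι → Ω => g (y i) - ν[g]) ((‖b - a‖₊ / 2) ^ 2)
        (Measure.pi fun _ => ν) := fun i _ =>
    .of_map (X := fun x => g x - ν[g]) (measurable_pi_apply i).aemeasurable
      (by rwa [(measurePreserving_eval (fun _ : ι => ν) i).map_eq])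
  have hindep := iIndepFun_pi (μ := fun _ : ι => ν) (X := fun _ x => g x - ν[g])
    fun _ => (hg.sub_const _).aemeasurable
  refine (HasSubgaussianMGF.measure_sum_ge_le_of_iIndepFun hindep hsub_i ht).trans_eq ?_
  congr 1
  simp only [sum_const, card_univ, nsmul_eq_mul, NNReal.coe_mul, NNReal.coe_natCast,
    NNReal.coe_pow, NNReal.coe_div, coe_nnnorm, Real.norm_eq_abs, NNReal.coe_ofNat, div_pow, sq_abs]
  field_simp

lemma measureReal_sampleMean_sub_integral_ge_le {k : ℕ} (hk : 0 < k) (hg : Measurable g)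
    (hab : ∀ᵐ x ∂ν, g x ∈ Set.Icc a b) (ht : 0 ≤ t) :
    (Measure.pi fun _ : Fin k => ν).real {y | t ≤ 1 / (k : ℝ) * ∑ i, g (y i) - ν[g]}
      ≤ exp (-(2 * k * t ^ 2 / (b - a) ^ 2)) := by
  have hk' : (0 : ℝ) < k := by exact_mod_cast hk
  have h := measureReal_sum_sub_integral_ge_le (ι := Fin k) hg hab (mul_nonneg hk'.le ht)
  have hset : {y : Fin k → Ω | t ≤ 1 / (k : ℝ) * ∑ i, g (y i) - ν[g]}
      = {y | k * t ≤ ∑ i, (g (y i) - ν[g])} := by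
    ext y
    simp only [Set.mem_ofPred_eq, sum_sub_distrib, sum_const, card_univ, Fintype.card_fin,
      nsmul_eq_mul]
    rw [← mul_le_mul_iff_of_pos_left hk']
    field_simp
  rw [hset]
  refine h.trans_eq ?_
  rw [Fintype.card_fin]
  congr 1
  field_simp

lemma measureReal_integral_sub_sampleMean_ge_le {k : ℕ} (hk : 0 < k) (hg : Measurable g)
    (hab : ∀ᵐ x ∂ν, g x ∈ Set.Icc a b) (ht : 0 ≤ t) :
    (Measure.pi fun _ : Fin k => ν).real {y | t ≤ ν[g] - 1 / (k : ℝ) * ∑ i, g (y i)}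
      ≤ exp (-(2 * k * t ^ 2 / (b - a) ^ 2)) := by
  have hneg : ∀ᵐ x ∂ν, -g x ∈ Set.Icc (-b) (-a) := by
    filter_upwards [hab] with x hx using ⟨neg_le_neg hx.2, neg_le_neg hx.1⟩
  have h := measureReal_sampleMean_sub_integral_ge_le hk hg.neg hneg ht
  simp only [Pi.neg_apply, sum_neg_distrib, integral_neg, mul_neg, sub_neg_eq_add] at h
  convert h using 3
  · ext y; constructor <;> intro h <;> linarith
  · ring

end Hoeffding

lemma measure_eval_preimage_le_ofReal {ι : Type*} [Fintype ι] {X : ι → Type*}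
    [∀ i, MeasurableSpace (X i)] (μ : ∀ i, Measure (X i)) [∀ i, IsProbabilityMeasure (μ i)]
    (j : ι) {s : Set (X j)} {r : ℝ} (h : (μ j).real s ≤ r) :
    Measure.pi μ (Function.eval j ⁻¹' s) ≤ ENNReal.ofReal r := by
  classical
  rw [Set.eval_preimage, Measure.pi_pi, Fintype.prod_eq_single j fun i hij => by
    rw [Function.update_of_ne hij, measure_univ], Function.update_self, ← ofReal_measureReal]
  exact ENNReal.ofReal_le_ofReal h

lemma ofReal_one_sub_le_of_measure_compl_le {Ω : Type*} [MeasurableSpace Ω] {μ : Measure Ω}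
    [IsProbabilityMeasure μ] {s : Set Ω} {δ : ℝ} (hδ : 0 ≤ δ) (h : μ sᶜ ≤ ENNReal.ofReal δ) :
    ENNReal.ofReal (1 - δ) ≤ μ s := by
  rw [ENNReal.ofReal_sub _ hδ, ENNReal.ofReal_one, tsub_le_iff_right]
  calc 1 = μ Set.univ := measure_univ.symm
    _ ≤ μ s + μ sᶜ := measure_univ_le_add_compl s
    _ ≤ μ s + ENNReal.ofReal δ := by gcongr

lemma mul_exp_neg_le_of_log_div_le {K C δ x : ℝ} (hK : 0 < K) (hKC : K ≤ C) (hδ : 0 < δ)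
    (hx : log (C / δ) ≤ x) : K * exp (-x) ≤ δ := by
  have hC : 0 < C := hK.trans_le hKC
  calc K * exp (-x) ≤ C * exp (-log (C / δ)) := by gcongr
    _ = δ := by rw [exp_neg, exp_log (by positivity)]; field_simp

/-- Selecting a maximiser of the estimates costs at most the overestimate of the selected
candidate plus the underestimate of the best one. -/
lemma measure_regret_ge_le_of_deviations {Ω ι : Type*} [MeasurableSpace Ω] [Fintype ι]
    (μ : Measure Ω) (v : ι → ℝ) (vhat : Ω → ι → ℝ) (iHat : Ω → ι)
    (hargmax : ∀ ω i, vhat ω i ≤ vhat ω (iHat ω)) (istar : ι) {ε β : ℝ} (hβ : 0 ≤ β)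
    (hover : ∀ i, μ {ω | ε / 2 ≤ vhat ω i - v i} ≤ ENNReal.ofReal β)
    (hunder : μ {ω | ε / 2 ≤ v istar - vhat ω istar} ≤ ENNReal.ofReal β) :
    μ {ω | ε ≤ v istar - v (iHat ω)} ≤ ENNReal.ofReal ((Fintype.card ι + 1) * β) := by
  have hsubset : {ω | ε ≤ v istar - v (iHat ω)}
      ⊆ {ω | ε / 2 ≤ v istar - vhat ω istar} ∪ ⋃ i, {ω | ε / 2 ≤ vhat ω i - v i} := by
    intro ω hω
    by_contra hnot
    simp only [Set.mem_union, Set.mem_iUnion, not_or, not_exists, Set.mem_ofPred_eq,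
      not_le] at hω hnot
    linarith [hnot.2 (iHat ω), hargmax ω istar]
  calc μ {ω | ε ≤ v istar - v (iHat ω)}
      ≤ μ {ω | ε / 2 ≤ v istar - vhat ω istar} + ∑ i, μ {ω | ε / 2 ≤ vhat ω i - v i} :=
        (measure_mono hsubset).trans
          ((measure_union_le _ _).trans (add_le_add le_rfl (measure_iUnion_fintype_le _ _)))
    _ ≤ ENNReal.ofReal β + ∑ _i : ι, ENNReal.ofReal β := by gcongr with i; exact hover i
    _ = ENNReal.ofReal ((Fintype.card ι + 1) * β) := by
        rw [sum_const, card_univ, nsmul_eq_mul, ← ENNReal.ofReal_natCast,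
          ← ENNReal.ofReal_mul (by positivity), ← ENNReal.ofReal_add hβ (by positivity)]
        ring_nf

section Barycenter

variable {ι α : Type*} {p : ι → α → ℝ} {s : Finset ι}

lemma barycenter_pos (hs : s.Nonempty) (hpos : ∀ i a, 0 < p i a) (a : α) :
    0 < 1 / (#s : ℝ) * ∑ i ∈ s, p i a :=
  mul_pos (by simpa using hs.card_pos) (sum_pos (fun i _ => hpos i a) hs)

lemma sum_barycenter [Fintype α] (hs : s.Nonempty) (hsum : ∀ i, ∑ a, p i a = 1) :
    ∑ a, 1 / (#s : ℝ) * ∑ i ∈ s, p i a = 1 := by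
  have : (#s : ℝ) ≠ 0 := by simpa using hs.card_pos.ne'
  rw [← mul_sum, sum_comm, sum_congr rfl fun i _ => hsum i, sum_const, nsmul_one]
  field_simp

end Barycenter

/-- The law of a logged pair `(A, R)` with `A ∼ ρ` and `R | A = a ∼ P a`. -/
noncomputable def actionRewardLaw {α : Type*} [Fintype α] [MeasurableSpace α] (ρ : α → ℝ)
    (P : α → Measure ℝ) : Measure (α × ℝ) :=
  ∑ a, ENNReal.ofReal (ρ a) • (Measure.dirac a).prod (P a)

section ActionRewardLaw

variable {α : Type*} [Fintype α] [MeasurableSpace α] {ρ : α → ℝ} {P : α → Measure ℝ}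

lemma isProbabilityMeasure_actionRewardLaw [∀ a, IsProbabilityMeasure (P a)]
    (hρ : ∀ a, 0 ≤ ρ a) (hsum : ∑ a, ρ a = 1) :
    IsProbabilityMeasure (actionRewardLaw ρ P) := by
  constructor
  simp only [actionRewardLaw, Measure.finsetSum_apply, Measure.smul_apply, measure_univ,
    smul_eq_mul, mul_one]
  rw [← ENNReal.ofReal_sum_of_nonneg fun a _ => hρ a, hsum, ENNReal.ofReal_one]

lemma ae_snd_mem_actionRewardLaw [∀ a, SFinite (P a)] {s : Set ℝ}
    (h : ∀ a, ∀ᵐ r ∂P a, r ∈ s) : ∀ᵐ x ∂actionRewardLaw ρ P, x.2 ∈ s := by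
  rw [ae_iff, actionRewardLaw, Measure.finsetSum_apply]
  refine sum_eq_zero fun a _ => ?_
  rw [Measure.smul_apply, ae_iff.mp (Measure.quasiMeasurePreserving_snd.ae (h a)), smul_zero]

lemma integral_actionRewardLaw [MeasurableSingletonClass α] [∀ a, SFinite (P a)]
    (hρ : ∀ a, 0 ≤ ρ a) {f : α × ℝ → ℝ} (hf : ∀ a, Integrable (fun r => f (a, r)) (P a)) :
    ∫ x, f x ∂actionRewardLaw ρ P = ∑ a, ρ a * ∫ r, f (a, r) ∂P a := by
  rw [actionRewardLaw, integral_finsetSum_measure fun a _ => ?_]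
  · refine sum_congr rfl fun a _ => ?_
    rw [integral_smul_measure, ENNReal.toReal_ofReal (hρ a), Measure.dirac_prod,
      (measurableEmbedding_prodMk_left a).integral_map, smul_eq_mul]
  · rw [Measure.dirac_prod]
    exact (((measurableEmbedding_prodMk_left a).integrable_map_iff).mpr (hf a)).smul_measure ENNReal.ofReal_ne_top

lemma integral_importanceWeight_mul_snd [MeasurableSingletonClass α] [∀ a, SFinite (P a)]
    (hρ : ∀ a, 0 < ρ a) (hP : ∀ a, Integrable id (P a)) (q : α → ℝ) :
    ∫ x, q x.1 / ρ x.1 * x.2 ∂actionRewardLaw ρ P = ∑ a, q a * ∫ r, r ∂P a := by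
  rw [integral_actionRewardLaw (fun a => (hρ a).le) fun a => (hP a).const_mul (q a / ρ a)]
  refine sum_congr rfl fun a _ => ?_
  rw [integral_const_mul (q a / ρ a) fun r => r]
  field_simp [(hρ a).ne']

lemma ae_importanceWeight_mul_snd_mem_Icc [∀ a, SFinite (P a)] {q : α → ℝ} {σ R : ℝ}
    (hρ : ∀ a, 0 ≤ ρ a) (hq : ∀ a, 0 ≤ q a) (hqσ : ∀ a, q a / ρ a ≤ σ)
    (hP : ∀ a, ∀ᵐ r ∂P a, r ∈ Set.Icc 0 R) :
    ∀ᵐ x ∂actionRewardLaw ρ P, q x.1 / ρ x.1 * x.2 ∈ Set.Icc 0 (σ * R) := by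
  filter_upwards [ae_snd_mem_actionRewardLaw hP] with x hx
  have hw : 0 ≤ q x.1 / ρ x.1 := div_nonneg (hq _) (hρ _)
  exact ⟨mul_nonneg hw hx.1, mul_le_mul (hqσ _) hx.2 hx.1 (hw.trans (hqσ _))⟩

end ActionRewardLaw

section ImportanceSampling

variable {α κ : Type*} [Fintype α] [MeasurableSpace α] [MeasurableSingletonClass α] [Fintype κ]
  {P : α → Measure ℝ} [∀ a, IsProbabilityMeasure (P a)] {ρ : κ → α → ℝ} {R σ : ℝ} {j : κ}
  {q : α → ℝ} {k : ℕ} {t : ℝ}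

lemma measure_importanceSampling_sub_value_ge_le (hρ : ∀ j a, 0 < ρ j a)
    (hρ1 : ∀ j, ∑ a, ρ j a = 1) (hP : ∀ a, ∀ᵐ r ∂P a, r ∈ Set.Icc 0 R) (hq : ∀ a, 0 ≤ q a)
    (hqσ : ∀ a, q a / ρ j a ≤ σ) (hk : 0 < k) (ht : 0 ≤ t) :
    Measure.pi (fun j => Measure.pi fun _ : Fin k => actionRewardLaw (ρ j) P)
      {ω | t ≤ 1 / (k : ℝ) * ∑ s, q (ω j s).1 / ρ j (ω j s).1 * (ω j s).2
        - ∑ a, q a * ∫ r, r ∂P a}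
      ≤ ENNReal.ofReal (exp (-(2 * k * t ^ 2 / (σ * R) ^ 2))) := by
  have := fun j => isProbabilityMeasure_actionRewardLaw (P := P) (fun a => (hρ j a).le) (hρ1 j)
  rw [← integral_importanceWeight_mul_snd (hρ j)
    (fun a => Integrable.of_mem_Icc 0 R aemeasurable_id (hP a)) q]
  have hg : Measurable fun x : α × ℝ => q x.1 / ρ j x.1 * x.2 :=
    ((measurable_of_finite fun a => q a / ρ j a).comp measurable_fst).mul measurable_snd
  simpa using measure_eval_preimage_le_ofReal
    (fun i => Measure.pi fun _ : Fin k => actionRewardLaw (ρ i) P) j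
    (measureReal_sampleMean_sub_integral_ge_le hk hg
      (ae_importanceWeight_mul_snd_mem_Icc (fun a => (hρ j a).le) hq hqσ hP) ht)

lemma measure_value_sub_importanceSampling_ge_le (hρ : ∀ j a, 0 < ρ j a)
    (hρ1 : ∀ j, ∑ a, ρ j a = 1) (hP : ∀ a, ∀ᵐ r ∂P a, r ∈ Set.Icc 0 R) (hq : ∀ a, 0 ≤ q a)
    (hqσ : ∀ a, q a / ρ j a ≤ σ) (hk : 0 < k) (ht : 0 ≤ t) :
    Measure.pi (fun j => Measure.pi fun _ : Fin k => actionRewardLaw (ρ j) P)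
      {ω | t ≤ ∑ a, q a * ∫ r, r ∂P a
        - 1 / (k : ℝ) * ∑ s, q (ω j s).1 / ρ j (ω j s).1 * (ω j s).2}
      ≤ ENNReal.ofReal (exp (-(2 * k * t ^ 2 / (σ * R) ^ 2))) := by
  have := fun j => isProbabilityMeasure_actionRewardLaw (P := P) (fun a => (hρ j a).le) (hρ1 j)
  rw [← integral_importanceWeight_mul_snd (hρ j)
    (fun a => Integrable.of_mem_Icc 0 R aemeasurable_id (hP a)) q]
  have hg : Measurable fun x : α × ℝ => q x.1 / ρ j x.1 * x.2 :=
    ((measurable_of_finite fun a => q a / ρ j a).comp measurable_fst).mul measurable_snd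
  simpa using measure_eval_preimage_le_ofReal
    (fun i => Measure.pi fun _ : Fin k => actionRewardLaw (ρ i) P) j
    (measureReal_integral_sub_sampleMean_ge_le hk hg
      (ae_importanceWeight_mul_snd_mem_Icc (fun a => (hρ j a).le) hq hqσ hP) ht)

end ImportanceSampling

lemma add_one_mul_exp_le_of_sample_size {N M n₁ L : ℕ} {R σ ε δ : ℝ} (hM : 0 < M)
    (hσR : 0 < σ * R) (hε : 0 < ε) (hδ : 0 < δ)
    (hsample : ((n₁ * M : ℕ) : ℝ) ≥ 2 * M * R ^ 2 * σ ^ 2 *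
      log ((2 + (N : ℝ) + M + ((M : ℝ) - 1) * ((L : ℝ) + 1)) / δ) / ε ^ 2) :
    ((N : ℝ) + 1) * exp (-(2 * n₁ * (ε / 2) ^ 2 / (σ * R) ^ 2)) ≤ δ := by
  have hM' : (1 : ℝ) ≤ M := by exact_mod_cast hM
  refine mul_exp_neg_le_of_log_div_le (Nat.cast_add_one_pos N)
    (C := 2 + N + M + (M - 1) * (L + 1)) (by nlinarith) hδ ?_
  rw [ge_iff_le, div_le_iff₀ (by positivity)] at hsample
  rw [le_div_iff₀ (by positivity)]
  push_cast at hsample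
  nlinarith

theorem clustered_regret_bound_general {α : Type*} [Fintype α] [MeasurableSpace α]
    [MeasurableSingletonClass α]
    (Rstar : ℝ) (hR : 0 < Rstar)
    (P : α → Measure ℝ) (hprob : ∀ a, IsProbabilityMeasure (P a))
    (hsupp : ∀ a, P a (Set.Icc 0 Rstar) = 1)
    (Q : α → ℝ) (hQ : ∀ a, Q a = ∫ x, x ∂(P a))
    (N M : ℕ) (hM : 0 < M)
    (p : Fin N → α → ℝ) (hpos : ∀ i a, 0 < p i a) (hsum : ∀ i, ∑ a, p i a = 1)
    -- the cluster assignment, cluster sizes, and cluster barycenters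
    (c : Fin N → Fin M)
    (Nsz : Fin M → ℕ) (hNsz : ∀ j, Nsz j = (Finset.univ.filter fun i => c i = j).card)
    (hNszpos : ∀ j, 0 < Nsz j)
    (pKLc : Fin M → α → ℝ)
    (hpKLc : ∀ j a, pKLc j a
      = (1 / (Nsz j : ℝ)) * ∑ i ∈ Finset.univ.filter (fun i => c i = j), p i a)
    -- the uniform maximal importance weight over the clusters
    (σc : ℝ) (hσc : σc = ⨆ i : Fin N, ⨆ a : α, p i a / pKLc (c i) a)
    -- values, the overall best policy, and per-cluster best policies
    (v : (α → ℝ) → ℝ) (hv : ∀ q, v q = ∑ a, q a * Q a)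
    (istar : Fin N)
    (Δ : ℝ)
    -- equal per-cluster sample sizes and the mutually independent per-cluster datasets
    (n₁ : ℕ) (hn₁ : 0 < n₁) (n : ℕ) (hn : n = n₁ * M)
    (μc : Fin M → Measure (α × ℝ))
    (hμc : ∀ j, μc j
      = ∑ a : α, (ENNReal.ofReal (pKLc j a)) • ((Measure.dirac a).prod (P a)))
    -- the per-cluster importance sampling estimates
    (vhat : (Fin M → Fin n₁ → α × ℝ) → Fin N → ℝ)
    (hvhat : ∀ ω i, vhat ω i = (1 / (n₁ : ℝ)) *
      ∑ t, (p i (ω (c i) t).1 / pKLc (c i) (ω (c i) t).1) * (ω (c i) t).2)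
    -- a measurable selection maximizing the estimated values
    (iHat : (Fin M → Fin n₁ → α × ℝ) → Fin N)
    (hargmax : ∀ ω i, vhat ω i ≤ vhat ω (iHat ω))
    (δ ε : ℝ) (hδ : δ ∈ Set.Ioo (0:ℝ) 1) (hε : ε ∈ Set.Ioc (0:ℝ) Δ)
    (hsample : (n : ℝ) ≥ 2 * M * Rstar ^ 2 * σc ^ 2 *
      Real.log ((2 + (N : ℝ) + M + ((M : ℝ) - 1) * ((Nsz ⟨0, hM⟩ : ℝ) + 1)) / δ) / ε ^ 2) :
    (Measure.pi (fun j : Fin M => Measure.pi (fun _ : Fin n₁ => μc j)))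
        {ω | v (p istar) - v (p (iHat ω)) < ε}
      ≥ ENNReal.ofReal (1 - δ) := by
  obtain ⟨hδ0, -⟩ := hδ
  obtain ⟨hε0, -⟩ := hε
  obtain rfl : μc = fun j => actionRewardLaw (pKLc j) P := funext hμc
  subst hn
  have := hprob
  have hcluster : ∀ j, (univ.filter fun i => c i = j).Nonempty := fun j =>
    card_pos.mp (hNsz j ▸ hNszpos j)
  have hpKL_pos : ∀ j a, 0 < pKLc j a := fun j a => by
    rw [hpKLc, hNsz]; exact barycenter_pos (hcluster j) hpos a
  have hpKL_sum : ∀ j, ∑ a, pKLc j a = 1 := fun j => by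
    simp only [hpKLc, hNsz]; exact sum_barycenter (hcluster j) hsum
  have hweight_le : ∀ i a, p i a / pKLc (c i) a ≤ σc := fun i a => hσc ▸
    le_ciSup_of_le (Set.finite_range _).bddAbove i
      (le_ciSup (f := fun a => p i a / pKLc (c i) a) (Set.finite_range _).bddAbove a)
  have hσc_pos : 0 < σc := by
    obtain ⟨a, -, -⟩ := exists_ne_zero_of_sum_ne_zero (hsum istar ▸ one_ne_zero)
    exact (div_pos (hpos istar a) (hpKL_pos _ a)).trans_le (hweight_le istar a)
  have hreward : ∀ a, ∀ᵐ r ∂P a, r ∈ Set.Icc 0 Rstar := fun a =>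
    mem_ae_iff.mpr ((prob_compl_eq_zero_iff measurableSet_Icc).mpr (hsupp a))
  have := fun j => isProbabilityMeasure_actionRewardLaw (P := P) (fun a => (hpKL_pos j a).le)
    (hpKL_sum j)
  refine ofReal_one_sub_le_of_measure_compl_le hδ0.le ?_
  simp only [Set.compl_ofPred, not_lt]
  refine (measure_regret_ge_le_of_deviations _ (fun i => v (p i)) vhat iHat hargmax istar
    (β := exp (-(2 * n₁ * (ε / 2) ^ 2 / (σc * Rstar) ^ 2))) (exp_pos _).le (fun i => ?_) ?_).trans
    (ENNReal.ofReal_le_ofReal ?_)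
  · simp only [hvhat, hv, hQ]
    exact measure_importanceSampling_sub_value_ge_le hpKL_pos hpKL_sum hreward
      (fun a => (hpos i a).le) (hweight_le i) hn₁ (half_pos hε0).le
  · simp only [hvhat, hv, hQ]
    exact measure_value_sub_importanceSampling_ge_le hpKL_pos hpKL_sum hreward
      (fun a => (hpos istar a).le) (hweight_le istar) hn₁ (half_pos hε0).le
  · rw [Fintype.card_fin]
    exact add_one_mul_exp_le_of_sample_size hM (by positivity) hε0 hδ0 hsample

/-- regret bound of clustered KL-based policy evaluation (Theorem 4.1 of
the paper).  Under the clustered setting with equal per-cluster sample sizes, if the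
total sample size `n = n₁·M` satisfies
`n ≥ 2MR*²σ_c² log((2+N+M+(M−1)(N₁+1))/δ)/ε²` for `ε ∈ (0, Δ]`, then the regret
`ℛ(π̂ₙ) = v(π*) − v(π̂ₙ)` of the maximizing clustered selection satisfies
`P(ℛ(π̂ₙ) < ε) ≥ 1 − δ`. -/
theorem clustered_regret_bound {α : Type*} [Fintype α] [MeasurableSpace α]
    [MeasurableSingletonClass α]
    (Rstar : ℝ) (hR : 0 < Rstar)
    (P : α → Measure ℝ) (hprob : ∀ a, IsProbabilityMeasure (P a))
    (hsupp : ∀ a, P a (Set.Icc 0 Rstar) = 1)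
    (Q : α → ℝ) (hQ : ∀ a, Q a = ∫ x, x ∂(P a))
    (N M : ℕ) (hN : 0 < N) (hM : 0 < M)
    (p : Fin N → α → ℝ) (hpos : ∀ i a, 0 < p i a) (hsum : ∀ i, ∑ a, p i a = 1)
    -- the cluster assignment, cluster sizes, and cluster barycenters
    (c : Fin N → Fin M)
    (Nsz : Fin M → ℕ) (hNsz : ∀ j, Nsz j = (Finset.univ.filter fun i => c i = j).card)
    (hNszpos : ∀ j, 0 < Nsz j)
    (pKLc : Fin M → α → ℝ)
    (hpKLc : ∀ j a, pKLc j a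
      = (1 / (Nsz j : ℝ)) * ∑ i ∈ Finset.univ.filter (fun i => c i = j), p i a)
    -- the uniform maximal importance weight over the clusters
    (σc : ℝ) (hσc : σc = ⨆ i : Fin N, ⨆ a : α, p i a / pKLc (c i) a)
    -- values, the overall best policy, and per-cluster best policies
    (v : (α → ℝ) → ℝ) (hv : ∀ q, v q = ∑ a, q a * Q a)
    (istar : Fin N) (hstar : ∀ i, v (p i) ≤ v (p istar))
    (ibest : Fin M → Fin N) (hibestmem : ∀ j, c (ibest j) = j)
    (hibest : ∀ j i, c i = j → v (p i) ≤ v (p (ibest j)))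
    -- Assumption (i): the overall best policy lies in cluster 1 (index `⟨0,_⟩`)
    (hclu1 : v (p istar) = v (p (ibest ⟨0, hM⟩)))
    -- Assumption (ii): the value gap between cluster 1 and the other clusters
    (Δ : ℝ) (hΔpos : 0 < Δ)
    (hgap : ∀ j : Fin M, j ≠ ⟨0, hM⟩ → v (p (ibest ⟨0, hM⟩)) - v (p (ibest j)) > Δ)
    -- equal per-cluster sample sizes and the mutually independent per-cluster datasets
    (n₁ : ℕ) (hn₁ : 0 < n₁) (n : ℕ) (hn : n = n₁ * M)
    (μc : Fin M → Measure (α × ℝ))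
    (hμc : ∀ j, μc j
      = ∑ a : α, (ENNReal.ofReal (pKLc j a)) • ((Measure.dirac a).prod (P a)))
    -- the per-cluster importance sampling estimates
    (vhat : (Fin M → Fin n₁ → α × ℝ) → Fin N → ℝ)
    (hvhat : ∀ ω i, vhat ω i = (1 / (n₁ : ℝ)) *
      ∑ t, (p i (ω (c i) t).1 / pKLc (c i) (ω (c i) t).1) * (ω (c i) t).2)
    -- a measurable selection maximizing the estimated values
    (iHat : (Fin M → Fin n₁ → α × ℝ) → Fin N) (hmeas : Measurable iHat)
    (hargmax : ∀ ω i, vhat ω i ≤ vhat ω (iHat ω))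
    (δ ε : ℝ) (hδ : δ ∈ Set.Ioo (0:ℝ) 1) (hε : ε ∈ Set.Ioc (0:ℝ) Δ)
    (hsample : (n : ℝ) ≥ 2 * M * Rstar ^ 2 * σc ^ 2 *
      Real.log ((2 + (N : ℝ) + M + ((M : ℝ) - 1) * ((Nsz ⟨0, hM⟩ : ℝ) + 1)) / δ) / ε ^ 2) :
    (Measure.pi (fun j : Fin M => Measure.pi (fun _ : Fin n₁ => μc j)))
        {ω | v (p istar) - v (p (iHat ω)) < ε}
      ≥ ENNReal.ofReal (1 - δ) :=
  clustered_regret_bound_general Rstar hR P hprob hsupp Q hQ N M hM p hpos hsum c Nsz hNsz hNszpos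
    pKLc hpKLc σc hσc v hv istar Δ n₁ hn₁ n hn μc hμc vhat hvhat iHat hargmax δ ε hδ hε hsample
end

section
/- In the clustered best-policy-selection setting (N strictly positive target policies partitioned into M clusters K₁,…,K_M of sizes N₁,…,N_M with barycenters π_KL^{(j)}, uniform maximal weight σ_c, rewards supported on [0, R*], the overall best policy lying in cluster 1 with strictly positive value gaps Δ_j = v(π*) − v(π*^{(j)}) > 0 for j ≥ 2, and equal per-cluster sample sizes n₁ = ⋯ = n_M with total n = M·n₁), the expected regret of the clustered selection π̂_n satisfies E[ v(π*) − v(π̂_n) ] ≤ (Δ_max/√n)·( 1 + M N₁/N + 2M/N ) + √2 · M^{3/2} · R* · σ_c · √( log(N√n) / n ), where Δ_max = max_j Δ_j. -/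
/-!
Let `D` be the largest estimation error `maxᵢ (v̂(πᵢ) - v(πᵢ))`. Since `π̂ₙ` maximises `v̂` and
`v̂(π*)` is unbiased, `E[v(π*) - v(π̂ₙ)] ≤ E[D]`. Each `v̂(πᵢ)` is the mean of `n₁` independent
importance-weighted rewards with values in `[0, σ_c R*]`, so by Hoeffding's lemma its error is
sub-Gaussian with variance proxy `(σ_c R*)² / (4 n₁)`. Jensen's inequality and a union bound over
the `N` exponential moments give `E[D] ≤ σ_c R* √(log N / (2 n₁))`, which is at most the second
term of the bound; the first term is nonnegative.
-/

open Finset Real MeasureTheory ProbabilityTheory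
open scoped NNReal

lemma le_two_mul_sqrt_mul_of_forall_le_div_add_mul {x a b : ℝ} (ha : 0 ≤ a) (hb : 0 ≤ b)
    (h : ∀ s > 0, x ≤ a / s + b * s) : x ≤ 2 * √(a * b) := by
  obtain ⟨u, hu, rfl⟩ : ∃ u ≥ 0, u ^ 2 = a := ⟨√a, sqrt_nonneg a, sq_sqrt ha⟩
  obtain ⟨w, hw, rfl⟩ : ∃ w ≥ 0, w ^ 2 = b := ⟨√b, sqrt_nonneg b, sq_sqrt hb⟩
  rw [← mul_pow, sqrt_sq (by positivity)]
  refine le_of_forall_pos_le_add fun ε hε => ?_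
  set δ := ε / (u + w + 1)
  have hδ : 0 < δ := by positivity
  -- `s = (u + δ) / (w + δ)` nearly balances the two terms
  calc x ≤ u ^ 2 / ((u + δ) / (w + δ)) + w ^ 2 * ((u + δ) / (w + δ)) := h _ (by positivity)
    _ ≤ u * (w + δ) + w * (u + δ) := by
        rw [div_div_eq_mul_div, mul_div_assoc']
        gcongr
        · rw [div_le_iff₀ (by positivity)]; nlinarith [mul_nonneg hu hδ.le]
        · rw [div_le_iff₀ (by positivity)]; nlinarith [mul_nonneg hw hδ.le]
    _ = 2 * (u * w) + δ * (u + w) := by ring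
    _ ≤ 2 * (u * w) + ε := by
        gcongr
        calc δ * (u + w) ≤ δ * (u + w + 1) := by nlinarith
          _ = ε := div_mul_cancel₀ _ (by positivity)

namespace ProbabilityTheory

variable {Ω : Type*} [MeasurableSpace Ω] {μ : Measure Ω}

lemma integrable_iSup_of_fintype {ι : Type*} [Fintype ι] [Nonempty ι] {X : ι → Ω → ℝ}
    (hX : ∀ i, Integrable (X i) μ) : Integrable (fun ω => ⨆ i, X i ω) μ := by
  refine (integrable_finsetSum univ fun i _ => (hX i).abs).mono'
    (AEMeasurable.iSup fun i => (hX i).aemeasurable).aestronglyMeasurable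
    (ae_of_all _ fun ω => ?_)
  obtain ⟨k, hk⟩ := exists_eq_ciSup_of_finite (f := fun i => X i ω)
  rw [← hk, norm_eq_abs]
  exact single_le_sum (f := fun i => |X i ω|) (fun i _ => abs_nonneg _) (mem_univ k)

lemma exp_mul_integral_le_integral_exp [IsProbabilityMeasure μ] {Y : Ω → ℝ}
    (hY : Integrable Y μ) {s : ℝ} (hexp : Integrable (fun ω => exp (s * Y ω)) μ) :
    exp (s * ∫ ω, Y ω ∂μ) ≤ ∫ ω, exp (s * Y ω) ∂μ := by
  have h := convexOn_exp.map_integral_le (μ := μ) (f := fun ω => s * Y ω)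
    continuous_exp.continuousOn isClosed_univ (ae_of_all _ fun _ => Set.mem_univ _)
    (hY.const_mul s) hexp
  rwa [integral_const_mul] at h

theorem integral_iSup_le_of_hasSubgaussianMGF [IsProbabilityMeasure μ] {ι : Type*} [Fintype ι]
    [Nonempty ι] {X : ι → Ω → ℝ} {c : ℝ≥0} (hX : ∀ i, HasSubgaussianMGF (X i) c μ) :
    ∫ ω, ⨆ i, X i ω ∂μ ≤ √(2 * c * log (Fintype.card ι)) := by
  set N : ℝ := (Fintype.card ι : ℝ)
  have hbound : ∀ s > 0, ∫ ω, ⨆ i, X i ω ∂μ ≤ log N / s + c / 2 * s := by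
    intro s hs
    have hexp_le : ∀ ω, exp (s * ⨆ i, X i ω) ≤ ∑ i, exp (s * X i ω) := fun ω => by
      obtain ⟨k, hk⟩ := exists_eq_ciSup_of_finite (f := fun i => X i ω)
      rw [← hk]
      exact single_le_sum (f := fun i => exp (s * X i ω)) (fun i _ => (exp_pos _).le)
        (mem_univ k)
    have hsum_int : Integrable (fun ω => ∑ i, exp (s * X i ω)) μ :=
      integrable_finsetSum univ fun i _ => (hX i).integrable_exp_mul s
    have hexp_int : Integrable (fun ω => exp (s * ⨆ i, X i ω)) μ :=
      hsum_int.mono' (measurable_exp.comp_aemeasurable ((AEMeasurable.iSup fun i =>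
        (hX i).aemeasurable).const_mul s)).aestronglyMeasurable <| ae_of_all _ fun ω => by
        rw [norm_of_nonneg (exp_pos _).le]; exact hexp_le ω
    have hmgf : exp (s * ∫ ω, ⨆ i, X i ω ∂μ) ≤ N * exp (c * s ^ 2 / 2) :=
      calc exp (s * ∫ ω, ⨆ i, X i ω ∂μ) ≤ ∫ ω, exp (s * ⨆ i, X i ω) ∂μ :=
            exp_mul_integral_le_integral_exp (integrable_iSup_of_fintype fun i =>
              (hX i).integrable) hexp_int
        _ ≤ ∑ i, mgf (X i) μ s := by
            simp only [mgf]
            rw [← integral_finsetSum univ fun i _ => (hX i).integrable_exp_mul s]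
            exact integral_mono hexp_int hsum_int hexp_le
        _ ≤ ∑ _i : ι, exp (c * s ^ 2 / 2) := sum_le_sum fun i _ => (hX i).mgf_le s
        _ = N * exp (c * s ^ 2 / 2) := by simp [N]
    have hlog := (le_log_iff_exp_le (by positivity)).2 hmgf
    rw [log_mul (by positivity) (exp_pos _).ne', log_exp] at hlog
    rw [div_add' _ _ _ hs.ne', le_div_iff₀ hs]
    nlinarith
  calc ∫ ω, ⨆ i, X i ω ∂μ ≤ 2 * √(log N * (c / 2)) :=
        le_two_mul_sqrt_mul_of_forall_le_div_add_mul
          (log_natCast_nonneg _) (by positivity) hbound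
    _ = √(2 * c * log N) := by
        rw [show (2 : ℝ) = √(2 ^ 2) by simp, ← sqrt_mul (by positivity)]
        ring_nf

lemma HasSubgaussianMGF.integral_eq_zero [IsProbabilityMeasure μ] {X : Ω → ℝ} {c : ℝ≥0}
    (h : HasSubgaussianMGF X c μ) : ∫ ω, X ω ∂μ = 0 := by
  have hle : ∀ {Y : Ω → ℝ}, HasSubgaussianMGF Y c μ → ∫ ω, Y ω ∂μ ≤ 0 := fun hY => by
    simpa using integral_iSup_le_of_hasSubgaussianMGF (ι := Unit) fun _ => hY
  have := hle h.neg
  simp only [Pi.neg_apply, integral_neg] at this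
  linarith [hle h]

theorem integral_sub_le_of_hasSubgaussianMGF_of_isMax [IsProbabilityMeasure μ] {ι : Type*}
    [Fintype ι] [MeasurableSpace ι] [MeasurableSingletonClass ι] {Y : Ω → ι → ℝ} {m : ι → ℝ}
    {c : ℝ≥0} (hY : ∀ i, HasSubgaussianMGF (fun ω => Y ω i - m i) c μ) {k : Ω → ι}
    (hk : Measurable k) (hmax : ∀ ω i, Y ω i ≤ Y ω (k ω)) (i : ι) :
    ∫ ω, (m i - m (k ω)) ∂μ ≤ √(2 * c * log (Fintype.card ι)) := by
  have : Nonempty ι := ⟨i⟩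
  have hD := integrable_iSup_of_fintype fun j => (hY j).integrable
  have hmk : Integrable (fun ω => m i - m (k ω)) μ :=
    (integrable_const _).sub <| (integrable_const (∑ j, |m j|)).mono'
      ((measurable_of_countable m).comp hk).aestronglyMeasurable <| ae_of_all _ fun ω =>
        single_le_sum (f := fun j => |m j|) (fun j _ => abs_nonneg _) (mem_univ (k ω))
  have hpt : ∀ ω, m i - m (k ω) ≤ -(Y ω i - m i) + ⨆ j, (Y ω j - m j) := fun ω => by
    have := le_ciSup (Set.finite_range fun j => Y ω j - m j).bddAbove (k ω)
    linarith [hmax ω i]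
  calc ∫ ω, (m i - m (k ω)) ∂μ ≤ ∫ ω, (-(Y ω i - m i) + ⨆ j, (Y ω j - m j)) ∂μ :=
        integral_mono hmk ((hY i).integrable.neg.add hD) hpt
    _ = ∫ ω, ⨆ j, (Y ω j - m j) ∂μ := by
        rw [integral_add (f := fun ω => -(Y ω i - m i)) (hY i).integrable.neg hD, integral_neg,
          (hY i).integral_eq_zero, neg_zero, zero_add]
    _ ≤ √(2 * c * log (Fintype.card ι)) := integral_iSup_le_of_hasSubgaussianMGF hY

lemma HasSubgaussianMGF.comp_eval_pi {ι : Type*} [Fintype ι] {E : ι → Type*}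
    [∀ j, MeasurableSpace (E j)] {ν : ∀ j, Measure (E j)} [∀ j, IsProbabilityMeasure (ν j)]
    {j : ι} {X : E j → ℝ} {c : ℝ≥0} (h : HasSubgaussianMGF X c (ν j)) :
    HasSubgaussianMGF (fun x => X (x j)) c (Measure.pi ν) :=
  HasSubgaussianMGF.of_map (measurable_pi_apply j).aemeasurable <| by
    rwa [(measurePreserving_eval ν j).map_eq]

lemma HasSubgaussianMGF.sum_pi {ι E : Type*} [Fintype ι] [MeasurableSpace E]
    {ν : Measure E} [IsProbabilityMeasure ν] {X : E → ℝ} {c : ℝ≥0}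
    (h : HasSubgaussianMGF X c ν) :
    HasSubgaussianMGF (fun x : ι → E => ∑ t, X (x t)) (Fintype.card ι * c)
      (Measure.pi fun _ => ν) := by
  classical
  have hind := iIndepFun_pi (μ := fun _ : ι => ν) (X := fun _ => X) fun _ => h.aemeasurable
  simpa using HasSubgaussianMGF.sum_of_iIndepFun hind (s := univ) fun t _ =>
    h.comp_eval_pi (j := t)

lemma HasSubgaussianMGF.mean_pi {E : Type*} [MeasurableSpace E] {ν : Measure E}
    [IsProbabilityMeasure ν] {X : E → ℝ} {c : ℝ≥0} {n : ℕ} (hn : 0 < n)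
    (h : HasSubgaussianMGF X c ν) :
    HasSubgaussianMGF (fun x : Fin n → E => 1 / n * ∑ t, X (x t)) (c / n)
      (Measure.pi fun _ => ν) := by
  convert (h.sum_pi (ι := Fin n)).const_mul (1 / n) using 1
  ext
  change (c : ℝ) / n = (1 / n) ^ 2 * ((Fintype.card (Fin n) : ℝ≥0) * c : ℝ≥0)
  push_cast [Fintype.card_fin]
  field_simp

end ProbabilityTheory

section BanditMeasure

variable {α : Type*} [Fintype α] [MeasurableSpace α]

/-- The law of one logged round `(A, R)`: `A ∼ q`, then `R ∼ P A`. -/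
noncomputable def banditMeasure (q : α → ℝ) (P : α → Measure ℝ) : Measure (α × ℝ) :=
  ∑ a, ENNReal.ofReal (q a) • (Measure.dirac a).prod (P a)

variable {q : α → ℝ} {P : α → Measure ℝ}

lemma isProbabilityMeasure_banditMeasure [∀ a, IsProbabilityMeasure (P a)]
    (hq : ∀ a, 0 ≤ q a) (hq1 : ∑ a, q a = 1) : IsProbabilityMeasure (banditMeasure q P) := by
  constructor
  simp only [banditMeasure, Measure.coe_finsetSum, Finset.sum_apply, Measure.smul_apply,
    measure_univ, smul_eq_mul, mul_one]
  rw [← ENNReal.ofReal_sum_of_nonneg fun a _ => hq a, hq1, ENNReal.ofReal_one]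

variable [MeasurableSingletonClass α]

lemma ae_snd_mem_banditMeasure [∀ a, SFinite (P a)] {S : Set ℝ} (h : ∀ a, ∀ᵐ r ∂P a, r ∈ S) :
    ∀ᵐ z ∂banditMeasure q P, z.2 ∈ S := by
  rw [ae_iff, banditMeasure, Measure.coe_finsetSum, Finset.sum_apply]
  refine sum_eq_zero fun a _ => ?_
  rw [Measure.smul_apply, Measure.dirac_prod, (measurableEmbedding_prodMk_left a).map_apply]
  simp [ae_iff.1 (h a)]

lemma integral_banditMeasure [∀ a, SFinite (P a)] (hq : ∀ a, 0 ≤ q a) {g : α × ℝ → ℝ}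
    (hg : ∀ a, Integrable (fun r => g (a, r)) (P a)) :
    ∫ z, g z ∂banditMeasure q P = ∑ a, q a * ∫ r, g (a, r) ∂P a := by
  have hg' : ∀ a, Integrable g ((Measure.dirac a).prod (P a)) := fun a => by
    rw [Measure.dirac_prod, (measurableEmbedding_prodMk_left a).integrable_map_iff]
    exact hg a
  rw [banditMeasure, integral_finsetSum_measure fun a _ =>
    (hg' a).smul_measure ENNReal.ofReal_ne_top]
  refine sum_congr rfl fun a _ => ?_
  rw [integral_smul_measure, Measure.dirac_prod,
    (measurableEmbedding_prodMk_left a).integral_map, ENNReal.toReal_ofReal (hq a), smul_eq_mul]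

theorem hasSubgaussianMGF_importanceWeighted [∀ a, IsProbabilityMeasure (P a)]
    (hq : ∀ a, 0 < q a) (hq1 : ∑ a, q a = 1) {w : α → ℝ} {σ R : ℝ} (hw : ∀ a, 0 ≤ w a)
    (hwσ : ∀ a, w a / q a ≤ σ) (hP : ∀ a, ∀ᵐ r ∂P a, r ∈ Set.Icc 0 R) :
    HasSubgaussianMGF (fun z => w z.1 / q z.1 * z.2 - ∑ a, w a * ∫ r, r ∂P a)
      ((‖σ * R‖₊ / 2) ^ 2) (banditMeasure q P) := by
  have := isProbabilityMeasure_banditMeasure (P := P) (fun a => (hq a).le) hq1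
  have hmean : ∫ z, w z.1 / q z.1 * z.2 ∂banditMeasure q P = ∑ a, w a * ∫ r, r ∂P a := by
    rw [integral_banditMeasure (fun a => (hq a).le) fun a =>
      (Integrable.of_mem_Icc 0 R aemeasurable_id (hP a)).const_mul (w a / q a)]
    refine sum_congr rfl fun a _ => ?_
    change q a * ∫ r, w a / q a * r ∂P a = _
    rw [integral_const_mul, ← mul_assoc, mul_div_cancel₀ _ (hq a).ne']
  rw [← hmean, ← sub_zero (σ * R)]
  refine hasSubgaussianMGF_of_mem_Icc
    (((measurable_of_countable fun a => w a / q a).comp measurable_fst).mul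
      measurable_snd).aemeasurable ?_
  filter_upwards [ae_snd_mem_banditMeasure hP] with z hz
  have hwq := div_nonneg (hw z.1) (hq z.1).le
  exact ⟨mul_nonneg hwq hz.1, mul_le_mul (hwσ z.1) hz.2 hz.1 (hwq.trans (hwσ z.1))⟩

theorem hasSubgaussianMGF_clusterImportanceWeighted {κ : Type*} [Fintype κ]
    [∀ a, IsProbabilityMeasure (P a)] {q : κ → α → ℝ} (hq : ∀ j a, 0 < q j a)
    (hq1 : ∀ j, ∑ a, q j a = 1) {j : κ} {w : α → ℝ} {σ R : ℝ} (hw : ∀ a, 0 ≤ w a)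
    (hwσ : ∀ a, w a / q j a ≤ σ) (hP : ∀ a, ∀ᵐ r ∂P a, r ∈ Set.Icc 0 R) {n : ℕ} (hn : 0 < n) :
    HasSubgaussianMGF
      (fun ω : κ → Fin n → α × ℝ => 1 / (n : ℝ) * ∑ t, w (ω j t).1 / q j (ω j t).1 * (ω j t).2
        - ∑ a, w a * ∫ r, r ∂P a)
      ((‖σ * R‖₊ / 2) ^ 2 / n) (Measure.pi fun j => Measure.pi fun _ => banditMeasure (q j) P) := by
  have := fun j => isProbabilityMeasure_banditMeasure (P := P) (fun a => (hq j a).le) (hq1 j)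
  refine (((hasSubgaussianMGF_importanceWeighted (hq j) (hq1 j) hw hwσ hP).mean_pi
    hn).comp_eval_pi (ν := fun j => Measure.pi fun _ => banditMeasure (q j) P)).congr
    (ae_of_all _ fun ω => ?_)
  simp only [sum_sub_distrib, sum_const, card_univ, Fintype.card_fin, nsmul_eq_mul]
  field_simp

end BanditMeasure

lemma average_pos {ι α : Type*} {s : Finset ι} (hs : s.Nonempty) {p : ι → α → ℝ}
    (hp : ∀ i ∈ s, ∀ a, 0 < p i a) (a : α) : 0 < 1 / (#s : ℝ) * ∑ i ∈ s, p i a :=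
  mul_pos (by simpa using hs.card_pos) (sum_pos (fun i hi => hp i hi a) hs)

lemma sum_average_eq_one {ι α : Type*} [Fintype α] {s : Finset ι} (hs : s.Nonempty)
    {p : ι → α → ℝ} (hp : ∀ i ∈ s, ∑ a, p i a = 1) :
    ∑ a, 1 / (#s : ℝ) * ∑ i ∈ s, p i a = 1 := by
  rw [← mul_sum, sum_comm, sum_congr rfl hp, sum_const, nsmul_one]
  field_simp [hs.card_pos.ne']

lemma sqrt_two_mul_div_mul_log_le {C m M L L' : ℝ} (hC : 0 ≤ C) (hm : 0 < m) (hM : 1 ≤ M)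
    (hL : 0 ≤ L) (hLL' : L ≤ L') :
    √(2 * (C ^ 2 / (4 * m)) * L) ≤ √2 * M ^ ((3 : ℝ) / 2) * C * √(L' / (m * M)) := by
  have hM0 : 0 ≤ M := zero_le_one.trans hM
  have hL' : 0 ≤ L' := hL.trans hLL'
  have hM3 : (M ^ ((3 : ℝ) / 2)) ^ 2 = M ^ 3 := by
    rw [← rpow_natCast, ← rpow_mul (by positivity)]; norm_num
  rw [sqrt_le_left (by positivity), mul_pow, mul_pow, mul_pow, sq_sqrt zero_le_two, hM3,
    sq_sqrt (by positivity)]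
  have : 1 ≤ M ^ 2 := one_le_pow₀ hM
  field_simp
  nlinarith [mul_le_mul hLL' this zero_le_one hL', sq_nonneg C]

theorem clustered_expected_regret_general {α : Type*} [Fintype α] [MeasurableSpace α]
    [MeasurableSingletonClass α]
    (Rstar : ℝ) (hR : 0 < Rstar)
    (P : α → Measure ℝ) (hprob : ∀ a, IsProbabilityMeasure (P a))
    (hsupp : ∀ a, P a (Set.Icc 0 Rstar) = 1)
    (Q : α → ℝ) (hQ : ∀ a, Q a = ∫ x, x ∂(P a))
    (N M : ℕ) (hN : 0 < N) (hM : 0 < M)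
    (p : Fin N → α → ℝ) (hpos : ∀ i a, 0 < p i a) (hsum : ∀ i, ∑ a, p i a = 1)
    -- the cluster assignment, cluster sizes, and cluster barycenters
    (c : Fin N → Fin M)
    (Nsz : Fin M → ℕ) (hNsz : ∀ j, Nsz j = (Finset.univ.filter fun i => c i = j).card)
    (hNszpos : ∀ j, 0 < Nsz j)
    (pKLc : Fin M → α → ℝ)
    (hpKLc : ∀ j a, pKLc j a
      = (1 / (Nsz j : ℝ)) * ∑ i ∈ Finset.univ.filter (fun i => c i = j), p i a)
    -- the uniform maximal importance weight over the clusters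
    (σc : ℝ) (hσc : σc = ⨆ i : Fin N, ⨆ a : α, p i a / pKLc (c i) a)
    -- values, the overall best policy, and per-cluster best policies
    (v : (α → ℝ) → ℝ) (hv : ∀ q, v q = ∑ a, q a * Q a)
    (istar : Fin N)
    (ibest : Fin M → Fin N)
    -- Assumption (i): the overall best policy lies in cluster 1 (index `⟨0,_⟩`)
    (hclu1 : v (p istar) = v (p (ibest ⟨0, hM⟩)))
    -- Assumption (ii): the value gap between cluster 1 and the other clusters
    (Δ : Fin M → ℝ) (hΔ : ∀ j, Δ j = v (p istar) - v (p (ibest j)))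
    (Δmax : ℝ) (hΔmax : Δmax = ⨆ j : Fin M, Δ j)
    -- equal per-cluster sample sizes and the mutually independent per-cluster datasets
    (n₁ : ℕ) (hn₁ : 0 < n₁) (n : ℕ) (hn : n = n₁ * M)
    (μc : Fin M → Measure (α × ℝ))
    (hμc : ∀ j, μc j
      = ∑ a : α, (ENNReal.ofReal (pKLc j a)) • ((Measure.dirac a).prod (P a)))
    -- the per-cluster importance sampling estimates
    (vhat : (Fin M → Fin n₁ → α × ℝ) → Fin N → ℝ)
    (hvhat : ∀ ω i, vhat ω i = (1 / (n₁ : ℝ)) *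
      ∑ t, (p i (ω (c i) t).1 / pKLc (c i) (ω (c i) t).1) * (ω (c i) t).2)
    -- a measurable selection maximizing the estimated values
    (iHat : (Fin M → Fin n₁ → α × ℝ) → Fin N) (hmeas : Measurable iHat)
    (hargmax : ∀ ω i, vhat ω i ≤ vhat ω (iHat ω))
    :
    ∫ ω, (v (p istar) - v (p (iHat ω)))
        ∂(Measure.pi (fun j : Fin M => Measure.pi (fun _ : Fin n₁ => μc j)))
      ≤ (Δmax / Real.sqrt n) * (1 + (M : ℝ) * (Nsz ⟨0, hM⟩ : ℝ) / N + 2 * M / N)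
        + Real.sqrt 2 * (M : ℝ) ^ ((3 : ℝ) / 2) * Rstar * σc *
            Real.sqrt (Real.log ((N : ℝ) * Real.sqrt n) / n) := by
  obtain rfl : μc = fun j => banditMeasure (pKLc j) P := funext hμc
  have hclus : ∀ j, (univ.filter fun i => c i = j).Nonempty := fun j =>
    card_pos.1 (hNsz j ▸ hNszpos j)
  have hq : ∀ j a, 0 < pKLc j a := fun j a => by
    rw [hpKLc, hNsz]; exact average_pos (hclus j) (fun i _ => hpos i) a
  have hq1 : ∀ j, ∑ a, pKLc j a = 1 := fun j => by
    simp only [hpKLc, hNsz]; exact sum_average_eq_one (hclus j) fun i _ => hsum i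
  have hw : ∀ i a, p i a / pKLc (c i) a ≤ σc := fun i a => hσc ▸
    le_ciSup_of_le (Set.finite_range _).bddAbove i
      (le_ciSup (f := fun a => p i a / pKLc (c i) a) (Set.finite_range _).bddAbove a)
  have hP : ∀ a, ∀ᵐ r ∂P a, r ∈ Set.Icc 0 Rstar := fun a =>
    (ae_iff_measure_eq measurableSet_Icc.nullMeasurableSet).2
      (by rw [measure_univ]; exact hsupp a)
  have hdev := fun i => (hasSubgaussianMGF_clusterImportanceWeighted hq hq1
    (fun a => (hpos i a).le) (hw i) hP hn₁).congr (Y := fun ω => vhat ω i - v (p i))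
    (ae_of_all _ fun ω => by simp only [hvhat, hv, hQ])
  have := fun j => isProbabilityMeasure_banditMeasure (P := P) (fun a => (hq j a).le) (hq1 j)
  have hσ : 0 ≤ σc := hσc ▸ Real.iSup_nonneg fun i => Real.iSup_nonneg fun a =>
    div_nonneg (hpos i a).le (hq _ a).le
  have hΔ0 : 0 ≤ Δmax := hΔmax ▸ le_ciSup_of_le (Set.finite_range Δ).bddAbove ⟨0, hM⟩
    (by rw [hΔ, hclu1, sub_self])
  have hn1 : (1 : ℝ) ≤ n := by rw [hn]; exact_mod_cast Nat.mul_pos hn₁ hM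
  calc _ ≤ √(2 * ((‖σc * Rstar‖₊ / 2) ^ 2 / n₁ : ℝ≥0) * log (Fintype.card (Fin N))) :=
        integral_sub_le_of_hasSubgaussianMGF_of_isMax hdev hmeas hargmax istar
    _ = √(2 * ((σc * Rstar) ^ 2 / (4 * n₁)) * log N) := by
        push_cast [Fintype.card_fin, norm_mul, Real.norm_eq_abs, mul_pow, div_pow, sq_abs]
        ring_nf
    _ ≤ √2 * M ^ ((3 : ℝ) / 2) * (σc * Rstar) * √(log (N * √n) / (n₁ * M)) :=
        sqrt_two_mul_div_mul_log_le (mul_nonneg hσ hR.le) (by exact_mod_cast hn₁)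
          (by exact_mod_cast hM) (log_nonneg (by exact_mod_cast hN)) (log_le_log (by positivity)
            (le_mul_of_one_le_right (by positivity) (one_le_sqrt.2 hn1)))
    _ = √2 * M ^ ((3 : ℝ) / 2) * Rstar * σc * √(log (N * √n) / n) := by
        rw [hn]; push_cast; ring
    _ ≤ _ := le_add_of_nonneg_left <|
        mul_nonneg (div_nonneg hΔ0 (sqrt_nonneg _)) (by positivity)

/-- problem-independent expected regret bound for clustered KL-based
policy evaluation (Corollary A.1 of the paper).  In the clustered setting with equal
per-cluster sample sizes `n₁` and total `n = M·n₁`, with value gaps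
`Δⱼ = v(π*) − v(π*^{(j)}) > 0` for `j ≥ 2` and `Δ_max = maxⱼ Δⱼ`, the expected regret
of the maximizing clustered selection satisfies
`E[v(π*) − v(π̂ₙ)] ≤ (Δ_max/√n)(1 + MN₁/N + 2M/N) + √2·M^{3/2}·R*·σ_c·√(log(N√n)/n)`. -/
theorem clustered_expected_regret {α : Type*} [Fintype α] [MeasurableSpace α]
    [MeasurableSingletonClass α]
    (Rstar : ℝ) (hR : 0 < Rstar)
    (P : α → Measure ℝ) (hprob : ∀ a, IsProbabilityMeasure (P a))
    (hsupp : ∀ a, P a (Set.Icc 0 Rstar) = 1)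
    (Q : α → ℝ) (hQ : ∀ a, Q a = ∫ x, x ∂(P a))
    (N M : ℕ) (hN : 0 < N) (hM : 0 < M)
    (p : Fin N → α → ℝ) (hpos : ∀ i a, 0 < p i a) (hsum : ∀ i, ∑ a, p i a = 1)
    -- the cluster assignment, cluster sizes, and cluster barycenters
    (c : Fin N → Fin M)
    (Nsz : Fin M → ℕ) (hNsz : ∀ j, Nsz j = (Finset.univ.filter fun i => c i = j).card)
    (hNszpos : ∀ j, 0 < Nsz j)
    (pKLc : Fin M → α → ℝ)
    (hpKLc : ∀ j a, pKLc j a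
      = (1 / (Nsz j : ℝ)) * ∑ i ∈ Finset.univ.filter (fun i => c i = j), p i a)
    -- the uniform maximal importance weight over the clusters
    (σc : ℝ) (hσc : σc = ⨆ i : Fin N, ⨆ a : α, p i a / pKLc (c i) a)
    -- values, the overall best policy, and per-cluster best policies
    (v : (α → ℝ) → ℝ) (hv : ∀ q, v q = ∑ a, q a * Q a)
    (istar : Fin N) (hstar : ∀ i, v (p i) ≤ v (p istar))
    (ibest : Fin M → Fin N) (hibestmem : ∀ j, c (ibest j) = j)
    (hibest : ∀ j i, c i = j → v (p i) ≤ v (p (ibest j)))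
    -- Assumption (i): the overall best policy lies in cluster 1 (index `⟨0,_⟩`)
    (hclu1 : v (p istar) = v (p (ibest ⟨0, hM⟩)))
    -- Assumption (ii): the value gap between cluster 1 and the other clusters
    (Δ : Fin M → ℝ) (hΔ : ∀ j, Δ j = v (p istar) - v (p (ibest j)))
    (hΔpos : ∀ j : Fin M, j ≠ ⟨0, hM⟩ → 0 < Δ j)
    (Δmax : ℝ) (hΔmax : Δmax = ⨆ j : Fin M, Δ j)
    -- equal per-cluster sample sizes and the mutually independent per-cluster datasets
    (n₁ : ℕ) (hn₁ : 0 < n₁) (n : ℕ) (hn : n = n₁ * M)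
    (μc : Fin M → Measure (α × ℝ))
    (hμc : ∀ j, μc j
      = ∑ a : α, (ENNReal.ofReal (pKLc j a)) • ((Measure.dirac a).prod (P a)))
    -- the per-cluster importance sampling estimates
    (vhat : (Fin M → Fin n₁ → α × ℝ) → Fin N → ℝ)
    (hvhat : ∀ ω i, vhat ω i = (1 / (n₁ : ℝ)) *
      ∑ t, (p i (ω (c i) t).1 / pKLc (c i) (ω (c i) t).1) * (ω (c i) t).2)
    -- a measurable selection maximizing the estimated values
    (iHat : (Fin M → Fin n₁ → α × ℝ) → Fin N) (hmeas : Measurable iHat)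
    (hargmax : ∀ ω i, vhat ω i ≤ vhat ω (iHat ω))
    :
    ∫ ω, (v (p istar) - v (p (iHat ω)))
        ∂(Measure.pi (fun j : Fin M => Measure.pi (fun _ : Fin n₁ => μc j)))
      ≤ (Δmax / Real.sqrt n) * (1 + (M : ℝ) * (Nsz ⟨0, hM⟩ : ℝ) / N + 2 * M / N)
        + Real.sqrt 2 * (M : ℝ) ^ ((3 : ℝ) / 2) * Rstar * σc *
            Real.sqrt (Real.log ((N : ℝ) * Real.sqrt n) / n) :=
  clustered_expected_regret_general Rstar hR P hprob hsupp Q hQ N M hN hM p hpos hsum c Nsz hNsz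
    hNszpos pKLc hpKLc σc hσc v hv istar ibest hclu1 Δ hΔ Δmax hΔmax n₁ hn₁ n hn μc hμc vhat hvhat
    iHat hmeas hargmax
end
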